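/- Let μ > 0, σ > 0, α > 1, and b be real. Define the one-sided truncated normal densities p(x) = (1/(μσ√(2π))) · exp(-x²/(2μ²σ²)) / Φ(b/(μσ)) and q(x) = (1/(μσ√(2π))) · exp(-(x-μ)²/(2μ²σ²)) / Φ((b-μ)/(μσ)) for x ≤ b. Then (1/(α-1)) · ln(∫_{-∞}^b p(x)^α · q(x)^(1-α) dx) ≤ α/(2σ²). -/

import Mathlib

open MeasureTheory Real Filter

/-- The standard normal cumulative distribution function
`Φ(x) = (√(2π))⁻¹ ∫_{-∞}^x exp(-t²/2) dt`. -/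
noncomputable def stdNormalCDF (x : ℝ) : ℝ :=
  (Real.sqrt (2 * Real.pi))⁻¹ * ∫ t in Set.Iic x, Real.exp (-t ^ 2 / 2)

/-- The standard normal density `φ(x) = (√(2π))⁻¹ exp(-x²/2)`. -/
noncomputable def stdNormalPDF (x : ℝ) : ℝ :=
  (Real.sqrt (2 * Real.pi))⁻¹ * Real.exp (-x ^ 2 / 2)

/-!
Both densities are Gaussians of the same variance `s²`, so `p^α q^(1-α)` is
`exp (α (α - 1) (m₁ - m₂)² / (2 s²))` times the Gaussian density centred at the extrapolated
mean `α m₁ + (1 - α) m₂`, divided by the normalisations `Φ₁^α Φ₂^(1-α)`. Integrating over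
`(-∞, B]` turns that density into `Φ` at the extrapolated point `α y + (1 - α) z` of the two
truncation points `y, z`. Since `Φ` is log-concave (Mills' inequality `x Φ(x) + φ(x) ≥ 0` makes
`(log Φ)'' = -φ (x Φ + φ) / Φ²` nonpositive), `Φ(α y + (1 - α) z) ≤ Φ(y)^α Φ(z)^(1-α)` for
`α ≥ 1`, and the normalisations cancel, leaving the bound `α (m₁ - m₂)² / (2 s²)`.
-/

open Set

theorem integral_Iic_comp_div_sub {E : Type*} [NormedAddCommGroup E] [NormedSpace ℝ E]
    (g : ℝ → E) (c B : ℝ) {s : ℝ} (hs : 0 < s) :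
    ∫ x in Iic B, g ((x - c) / s) = s • ∫ t in Iic ((B - c) / s), g t := by
  have himage : (fun t => s * t + c) '' Iic ((B - c) / s) = Iic B := by
    ext x
    simp only [mem_image, mem_Iic]
    refine ⟨fun ⟨t, ht, hx⟩ => ?_, fun hx => ⟨(x - c) / s, ?_, ?_⟩⟩
    · rw [le_div_iff₀ hs] at ht; linarith
    · exact div_le_div_of_nonneg_right (by linarith) hs.le
    · field_simp; ring
  have hinj : InjOn (fun t => s * t + c) (Iic ((B - c) / s)) := fun t _ u _ h => by
    simpa [hs.ne'] using h
  have hderiv : ∀ t ∈ Iic ((B - c) / s), HasDerivWithinAt (fun t => s * t + c) s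
      (Iic ((B - c) / s)) t := fun t _ =>
    (((hasDerivAt_id t).const_mul s).add_const c).hasDerivWithinAt.congr_deriv (mul_one s)
  rw [← himage, integral_image_eq_integral_abs_deriv_smul measurableSet_Iic hderiv hinj,
    abs_of_pos hs, integral_smul]
  congr 2 with t
  rw [add_sub_cancel_right, mul_div_cancel_left₀ _ hs.ne']

theorem ConcaveOn.apply_smul_add_smul_le_of_one_le {E : Type*} [AddCommGroup E] [Module ℝ E]
    {s : Set E} {g : E → ℝ} (hg : ConcaveOn ℝ s g) {α : ℝ} (hα : 1 ≤ α) {y z : E}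
    (hx : α • y + (1 - α) • z ∈ s) (hz : z ∈ s) :
    g (α • y + (1 - α) • z) ≤ α * g y + (1 - α) * g z := by
  have hα0 : 0 < α := by linarith
  have hy : α⁻¹ • (α • y + (1 - α) • z) + (1 - α⁻¹) • z = y := by
    match_scalars <;> field_simp
    ring
  have h := hg.2 hx hz (inv_nonneg.2 hα0.le) (sub_nonneg.2 (inv_le_one_of_one_le₀ hα))
    (add_sub_cancel _ _)
  rw [hy, smul_eq_mul, smul_eq_mul] at h
  have := mul_le_mul_of_nonneg_left h hα0.le
  field_simp at this
  linarith

theorem gaussian_rpow_mul_gaussian_rpow_one_sub {a₁ a₂ : ℝ} (ha₁ : 0 ≤ a₁) (ha₂ : 0 ≤ a₂)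
    (α m₁ m₂ v x : ℝ) :
    (a₁ * exp (-(x - m₁) ^ 2 / v)) ^ α * (a₂ * exp (-(x - m₂) ^ 2 / v)) ^ (1 - α) =
      a₁ ^ α * a₂ ^ (1 - α) * exp (α * (α - 1) * (m₁ - m₂) ^ 2 / v) *
        exp (-(x - (α * m₁ + (1 - α) * m₂)) ^ 2 / v) := by
  have hexponent : -(x - m₁) ^ 2 / v * α + -(x - m₂) ^ 2 / v * (1 - α) =
      α * (α - 1) * (m₁ - m₂) ^ 2 / v + -(x - (α * m₁ + (1 - α) * m₂)) ^ 2 / v := by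
    ring
  rw [mul_rpow ha₁ (exp_pos _).le, mul_rpow ha₂ (exp_pos _).le, ← exp_mul, ← exp_mul,
    mul_assoc (a₁ ^ α * a₂ ^ (1 - α)), ← exp_add, ← hexponent, exp_add]
  ring

theorem integrable_exp_neg_sq_div_two : Integrable fun t : ℝ => exp (-t ^ 2 / 2) := by
  simpa [neg_div, div_eq_inv_mul] using integrable_exp_neg_mul_sq (by norm_num : (0 : ℝ) < 2⁻¹)

theorem integrable_neg_mul_exp_neg_sq_div_two :
    Integrable fun t : ℝ => -t * exp (-t ^ 2 / 2) := by
  simpa [neg_div, div_eq_inv_mul] using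
    (integrable_mul_exp_neg_mul_sq (by norm_num : (0 : ℝ) < 2⁻¹)).neg

theorem hasDerivAt_exp_neg_sq_div_two (t : ℝ) :
    HasDerivAt (fun t : ℝ => exp (-t ^ 2 / 2)) (-t * exp (-t ^ 2 / 2)) t := by
  have h : HasDerivAt (fun t : ℝ => -t ^ 2 / 2) (-t) t :=
    ((hasDerivAt_pow 2 t).neg.div_const 2).congr_deriv (by norm_num; ring)
  simpa [mul_comm] using h.exp

theorem stdNormalCDF_pos (x : ℝ) : 0 < stdNormalCDF x := by
  refine mul_pos (by positivity) ?_
  rw [setIntegral_pos_iff_support_of_nonneg_ae (ae_of_all _ fun t => (exp_pos _).le)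
    integrable_exp_neg_sq_div_two.integrableOn]
  simp [Function.support, (exp_pos _).ne', Real.volume_Iic]

theorem stdNormalPDF_pos (x : ℝ) : 0 < stdNormalPDF x :=
  mul_pos (by positivity) (exp_pos _)

theorem hasDerivAt_stdNormalCDF (x : ℝ) : HasDerivAt stdNormalCDF (stdNormalPDF x) x := by
  have hcont : Continuous fun t : ℝ => exp (-t ^ 2 / 2) := by fun_prop
  have hsplit : ∀ y, stdNormalCDF y = (√(2 * π))⁻¹ *
      ((∫ t in Iic 0, exp (-t ^ 2 / 2)) + ∫ t in 0..y, exp (-t ^ 2 / 2)) := fun y => by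
    rw [← intervalIntegral.integral_Iic_sub_Iic integrable_exp_neg_sq_div_two.integrableOn
      integrable_exp_neg_sq_div_two.integrableOn, add_sub_cancel, stdNormalCDF]
  have hFTC : HasDerivAt (fun y => ∫ t in 0..y, exp (-t ^ 2 / 2)) (exp (-x ^ 2 / 2)) x :=
    intervalIntegral.integral_hasDerivAt_right (hcont.intervalIntegrable _ _)
      (hcont.stronglyMeasurableAtFilter _ _) hcont.continuousAt
  exact ((hFTC.const_add _).const_mul _).congr_of_eventuallyEq (Eventually.of_forall hsplit)

theorem hasDerivAt_stdNormalPDF (x : ℝ) : HasDerivAt stdNormalPDF (-x * stdNormalPDF x) x :=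
  ((hasDerivAt_exp_neg_sq_div_two x).const_mul (√(2 * π))⁻¹).congr_deriv
    (by unfold stdNormalPDF; ring)

theorem integral_Iic_neg_mul_exp_neg_sq_div_two (x : ℝ) :
    ∫ t in Iic x, -t * exp (-t ^ 2 / 2) = exp (-x ^ 2 / 2) := by
  have hderiv : ∀ t ∈ Iic x, HasDerivAt (fun t : ℝ => exp (-t ^ 2 / 2))
      (-t * exp (-t ^ 2 / 2)) t := fun t _ => hasDerivAt_exp_neg_sq_div_two t
  rw [integral_Iic_of_hasDerivAt_of_tendsto' hderiv
    integrable_neg_mul_exp_neg_sq_div_two.integrableOn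
    (tendsto_zero_of_hasDerivAt_of_integrableOn_Iic hderiv
      integrable_neg_mul_exp_neg_sq_div_two.integrableOn
      integrable_exp_neg_sq_div_two.integrableOn), sub_zero]

theorem mul_stdNormalCDF_add_stdNormalPDF_nonneg (x : ℝ) :
    0 ≤ x * stdNormalCDF x + stdNormalPDF x := by
  suffices -x * stdNormalCDF x ≤ stdNormalPDF x by linarith
  rw [stdNormalCDF, stdNormalPDF, mul_left_comm, ← integral_const_mul,
    ← integral_Iic_neg_mul_exp_neg_sq_div_two x]
  refine mul_le_mul_of_nonneg_left (setIntegral_mono_on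
    (integrable_exp_neg_sq_div_two.integrableOn.const_mul _)
    integrable_neg_mul_exp_neg_sq_div_two.integrableOn measurableSet_Iic fun t ht => ?_)
    (by positivity)
  exact mul_le_mul_of_nonneg_right (neg_le_neg ht) (exp_pos _).le

theorem concaveOn_log_stdNormalCDF : ConcaveOn ℝ univ fun x => log (stdNormalCDF x) := by
  have hd1 : ∀ x, HasDerivAt (fun x => log (stdNormalCDF x))
      (stdNormalPDF x / stdNormalCDF x) x := fun x =>
    (hasDerivAt_stdNormalCDF x).log (stdNormalCDF_pos x).ne'
  have hd2 : ∀ x, HasDerivAt (fun x => stdNormalPDF x / stdNormalCDF x)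
      ((-x * stdNormalPDF x * stdNormalCDF x - stdNormalPDF x * stdNormalPDF x) /
        stdNormalCDF x ^ 2) x := fun x =>
    (hasDerivAt_stdNormalPDF x).div (hasDerivAt_stdNormalCDF x) (stdNormalCDF_pos x).ne'
  have hderiv : deriv (fun x => log (stdNormalCDF x)) =
      fun x => stdNormalPDF x / stdNormalCDF x := funext fun x => (hd1 x).deriv
  refine concaveOn_univ_of_deriv2_nonpos (fun x => (hd1 x).differentiableAt)
    (hderiv ▸ fun x => (hd2 x).differentiableAt) fun x => ?_
  rw [Function.iterate_succ_apply, Function.iterate_one, hderiv, (hd2 x).deriv]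
  refine div_nonpos_of_nonpos_of_nonneg ?_ (sq_nonneg _)
  linarith [mul_nonneg (stdNormalPDF_pos x).le (mul_stdNormalCDF_add_stdNormalPDF_nonneg x)]

theorem stdNormalCDF_le_rpow_mul_rpow {α : ℝ} (hα : 1 ≤ α) (y z : ℝ) :
    stdNormalCDF (α * y + (1 - α) * z) ≤ stdNormalCDF y ^ α * stdNormalCDF z ^ (1 - α) := by
  have hy := stdNormalCDF_pos y
  have hz := stdNormalCDF_pos z
  rw [← log_le_log_iff (stdNormalCDF_pos _) (by positivity), log_mul (by positivity)
    (by positivity), log_rpow hy, log_rpow hz]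
  exact concaveOn_log_stdNormalCDF.apply_smul_add_smul_le_of_one_le hα (mem_univ _) (mem_univ _)

theorem integral_Iic_gaussian (m B : ℝ) {s : ℝ} (hs : 0 < s) :
    ∫ x in Iic B, 1 / (s * √(2 * π)) * exp (-(x - m) ^ 2 / (2 * s ^ 2)) =
      stdNormalCDF ((B - m) / s) := by
  have hexp : ∀ x, exp (-(x - m) ^ 2 / (2 * s ^ 2)) = exp (-((x - m) / s) ^ 2 / 2) := by
    intro x; congr 1; field_simp
  simp_rw [hexp]
  rw [integral_const_mul, integral_Iic_comp_div_sub (fun t => exp (-t ^ 2 / 2)) m B hs,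
    smul_eq_mul, stdNormalCDF, ← mul_assoc]
  congr 1
  field_simp

theorem integral_Iic_gaussian_rpow_mul_gaussian_rpow_one_sub {s : ℝ} (hs : 0 < s)
    (α m₁ m₂ B : ℝ) {c₁ c₂ : ℝ} (hc₁ : 0 < c₁) (hc₂ : 0 < c₂) :
    ∫ x in Iic B, (1 / (s * √(2 * π)) * exp (-(x - m₁) ^ 2 / (2 * s ^ 2)) / c₁) ^ α *
        (1 / (s * √(2 * π)) * exp (-(x - m₂) ^ 2 / (2 * s ^ 2)) / c₂) ^ (1 - α) =
      exp (α * (α - 1) * (m₁ - m₂) ^ 2 / (2 * s ^ 2)) *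
        (stdNormalCDF ((B - (α * m₁ + (1 - α) * m₂)) / s) / (c₁ ^ α * c₂ ^ (1 - α))) := by
  set A := 1 / (s * √(2 * π))
  have hA : 0 < A := by positivity
  have hpointwise : ∀ x, (A * exp (-(x - m₁) ^ 2 / (2 * s ^ 2)) / c₁) ^ α *
      (A * exp (-(x - m₂) ^ 2 / (2 * s ^ 2)) / c₂) ^ (1 - α) =
      exp (α * (α - 1) * (m₁ - m₂) ^ 2 / (2 * s ^ 2)) / (c₁ ^ α * c₂ ^ (1 - α)) *
        (A * exp (-(x - (α * m₁ + (1 - α) * m₂)) ^ 2 / (2 * s ^ 2))) := fun x => by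
    have hA' : A ^ α * A ^ (1 - α) = A := by rw [← rpow_add hA, add_sub_cancel, rpow_one]
    rw [mul_div_right_comm, mul_div_right_comm A, gaussian_rpow_mul_gaussian_rpow_one_sub
      (div_pos hA hc₁).le (div_pos hA hc₂).le, div_rpow hA.le hc₁.le, div_rpow hA.le hc₂.le,
      div_mul_div_comm, hA']
    ring
  rw [integral_congr_ae (ae_of_all _ hpointwise), integral_const_mul, integral_Iic_gaussian _ _ hs]
  ring

theorem renyi_truncated_gaussian_Iic_le {s : ℝ} (hs : 0 < s) {α : ℝ} (hα : 1 < α)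
    (m₁ m₂ B : ℝ) :
    1 / (α - 1) * log (∫ x in Iic B,
        (1 / (s * √(2 * π)) * exp (-(x - m₁) ^ 2 / (2 * s ^ 2)) /
          stdNormalCDF ((B - m₁) / s)) ^ α *
        (1 / (s * √(2 * π)) * exp (-(x - m₂) ^ 2 / (2 * s ^ 2)) /
          stdNormalCDF ((B - m₂) / s)) ^ (1 - α)) ≤
      α * (m₁ - m₂) ^ 2 / (2 * s ^ 2) := by
  have hΦ₁ := stdNormalCDF_pos ((B - m₁) / s)
  have hΦ₂ := stdNormalCDF_pos ((B - m₂) / s)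
  set E := α * (α - 1) * (m₁ - m₂) ^ 2 / (2 * s ^ 2) with hE
  set r := stdNormalCDF ((B - (α * m₁ + (1 - α) * m₂)) / s) /
    (stdNormalCDF ((B - m₁) / s) ^ α * stdNormalCDF ((B - m₂) / s) ^ (1 - α))
  have hr : 0 < r := div_pos (stdNormalCDF_pos _) (by positivity)
  have hr_le_one : r ≤ 1 := by
    refine div_le_one_of_le₀ ?_ (by positivity)
    have h := stdNormalCDF_le_rpow_mul_rpow hα.le ((B - m₁) / s) ((B - m₂) / s)
    rwa [show α * ((B - m₁) / s) + (1 - α) * ((B - m₂) / s) =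
      (B - (α * m₁ + (1 - α) * m₂)) / s by field_simp; ring] at h
  rw [integral_Iic_gaussian_rpow_mul_gaussian_rpow_one_sub hs α m₁ m₂ B hΦ₁ hΦ₂, ← hE,
    log_mul (exp_pos _).ne' hr.ne', log_exp]
  calc 1 / (α - 1) * (E + log r) ≤ 1 / (α - 1) * E := by
        gcongr
        linarith [log_nonpos hr.le hr_le_one]
    _ = α * (m₁ - m₂) ^ 2 / (2 * s ^ 2) := by
        rw [hE]
        field_simp [(sub_pos.2 hα).ne']

/-- Theorem 4.1, one direction: the Rényi divergence
`D_α(f(·;0,μσ,-∞,b) ‖ f(·;μ,μσ,-∞,b))` is at most `α/(2σ²)`. -/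
theorem renyi_truncated_normal_halfline_le (μ σ α b : ℝ)
    (hμ : 0 < μ) (hσ : 0 < σ) (hα : 1 < α) :
    (1 / (α - 1)) * Real.log (∫ x in Set.Iic b,
        ((1 / (μ * σ * Real.sqrt (2 * Real.pi))) *
            Real.exp (-x ^ 2 / (2 * μ ^ 2 * σ ^ 2)) /
            stdNormalCDF (b / (μ * σ))) ^ α *
        ((1 / (μ * σ * Real.sqrt (2 * Real.pi))) *
            Real.exp (-(x - μ) ^ 2 / (2 * μ ^ 2 * σ ^ 2)) /
            stdNormalCDF ((b - μ) / (μ * σ))) ^ (1 - α)) ≤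
      α / (2 * σ ^ 2) := by
  have h := renyi_truncated_gaussian_Iic_le (mul_pos hμ hσ) hα 0 μ b
  have hbound : α * (0 - μ) ^ 2 / (2 * (μ * σ) ^ 2) = α / (2 * σ ^ 2) := by
    rw [zero_sub, neg_sq]
    field_simp
  rw [hbound, mul_pow, ← mul_assoc 2] at h
  simpa only [sub_zero] using h
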